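/- For all indices 1 ≤ i, j ≤ r and 1 ≤ m ≤ n: [S_{ij} + M_{fⱼ}∘∂_{tᵢ}, ∂_{x_m} + Σ_{k=1}^r M_{∂f_k/∂x_m}∘∂_{t_k}] = 0, i.e. the operator S_{ij} + M_{fⱼ}∘∂_{tᵢ} commutes with ∂_{x_m} + Σ_k M_{∂f_k/∂x_m}∘∂_{t_k} as K-linear endomorphisms of K[x₁,…,xₙ,t₁,…,t_r]. -/

import Mathlib

open MvPolynomial

variable (K : Type*) [Field K] (n r : ℕ)

/-- The image of `fⱼ ∈ K[x₁,…,xₙ]` in `K[x₁,…,xₙ,t₁,…,t_r]` under the natural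
inclusion. -/
noncomputable def liftX (f : MvPolynomial (Fin n) K) :
    MvPolynomial (Fin n ⊕ Fin r) K :=
  rename Sum.inl f

/-- The operator `S_{ij} = −M_{tⱼ} ∘ ∂_{tᵢ} − δ_{ij}·id` on `K[x₁,…,xₙ,t₁,…,t_r]`
(Mellin substitution `s_{ij} ↦ −tⱼ∂_{tᵢ} − δ_{ij}`). -/
noncomputable def SOp (i j : Fin r) :
    Module.End K (MvPolynomial (Fin n ⊕ Fin r) K) :=
  -(LinearMap.mulLeft K (X (Sum.inr j)) * (pderiv (Sum.inr i)).toLinearMap) -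
    (if i = j then (1 : K) else 0) • 1

/-!
The operator `D = ∂_{x_m} + Σ_k (∂f_k/∂x_m) ∂_{t_k}` is a derivation of `K[x, t]` that kills
every `t_j - f_j`, and it commutes with `∂_{t_i}` because its coefficients do not involve `t`.
Since `S_{ij} + f_j ∂_{t_i} = (f_j - t_j) ∂_{t_i} - δ_{ij}` and `[D, M_h] = M_{D h}`, both
summands commute with `D`.
-/
theorem Derivation.finset_sum_apply {ι R A M : Type*} [CommSemiring R] [CommSemiring A]
    [Algebra R A] [AddCommMonoid M] [Module A M] [Module R M] (s : Finset ι)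
    (D : ι → Derivation R A M) (a : A) : (∑ k ∈ s, D k) a = ∑ k ∈ s, D k a := by
  simp only [← coeFnAddMonoidHom_apply, map_sum, Finset.sum_apply]

theorem MvPolynomial.commute_pderiv {R σ : Type*} [CommRing R] (a b : σ) :
    Commute (pderiv a : Derivation R (MvPolynomial σ R) _).toLinearMap
      (pderiv b).toLinearMap := by
  classical
  have hbracket : ⁅pderiv a, pderiv b⁆ = (0 : Derivation R (MvPolynomial σ R) _) :=
    derivation_ext fun i => by
      rw [Derivation.commutator_apply]
      simp [pderiv_X, Pi.single_apply, apply_ite]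
  rw [commute_iff_lie_eq, ← Derivation.commutator_coe_linear_map, hbracket]
  rfl

theorem Derivation.commute_mulLeft_of_apply_eq_zero {R A : Type*} [CommSemiring R]
    [CommSemiring A] [Algebra R A] (D : Derivation R A A) {h : A} (hD : D h = 0) :
    Commute (LinearMap.mulLeft R h) (D : Module.End R A) := by
  ext p
  simp [D.leibniz, hD]

theorem pderiv_inr_liftX (i : Fin r) (p : MvPolynomial (Fin n) K) :
    pderiv (Sum.inr i) (liftX K n r p) = 0 := by
  apply pderiv_eq_zero_of_notMem_vars
  intro h
  obtain ⟨a, -, ha⟩ := Finset.mem_image.1 (vars_rename _ _ h)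
  exact Sum.inl_ne_inr ha

theorem pderiv_inl_liftX (m : Fin n) (p : MvPolynomial (Fin n) K) :
    pderiv (Sum.inl m) (liftX K n r p) = liftX K n r (pderiv m p) :=
  pderiv_rename Sum.inl_injective m p

theorem SOp_add_mulLeft_mul_pderiv (i j : Fin r) (g : MvPolynomial (Fin n ⊕ Fin r) K) :
    SOp K n r i j + LinearMap.mulLeft K g * (pderiv (Sum.inr i)).toLinearMap =
      LinearMap.mulLeft K (g - X (Sum.inr j)) * (pderiv (Sum.inr i)).toLinearMap -
        (if i = j then (1 : K) else 0) • 1 := by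
  have hsub : LinearMap.mulLeft K (g - X (Sum.inr j)) =
      LinearMap.mulLeft K g - LinearMap.mulLeft K (X (Sum.inr j)) :=
    LinearMap.ext fun _ => sub_mul _ _ _
  rw [SOp, hsub, sub_mul]
  abel

noncomputable def totalPDeriv (f : Fin r → MvPolynomial (Fin n) K) (m : Fin n) :
    Derivation K (MvPolynomial (Fin n ⊕ Fin r) K) (MvPolynomial (Fin n ⊕ Fin r) K) :=
  pderiv (Sum.inl m) + ∑ k, pderiv (Sum.inl m) (liftX K n r (f k)) • pderiv (Sum.inr k)

theorem totalPDeriv_toLinearMap (f : Fin r → MvPolynomial (Fin n) K) (m : Fin n) :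
    (totalPDeriv K n r f m : Module.End K (MvPolynomial (Fin n ⊕ Fin r) K)) =
      (pderiv (Sum.inl m)).toLinearMap +
        ∑ k, LinearMap.mulLeft K (pderiv (Sum.inl m) (liftX K n r (f k))) *
          (pderiv (Sum.inr k)).toLinearMap := by
  ext p
  simp [totalPDeriv, Derivation.finset_sum_apply]

theorem totalPDeriv_liftX_sub_X (f : Fin r → MvPolynomial (Fin n) K) (m : Fin n) (j : Fin r) :
    totalPDeriv K n r f m (liftX K n r (f j) - X (Sum.inr j)) = 0 := by
  simp [totalPDeriv, Derivation.finset_sum_apply, pderiv_inr_liftX, pderiv_X, Pi.single_apply]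

theorem commute_pderiv_inr_totalPDeriv (f : Fin r → MvPolynomial (Fin n) K) (m : Fin n)
    (i : Fin r) :
    Commute (pderiv (Sum.inr i) : Derivation K (MvPolynomial (Fin n ⊕ Fin r) K) _).toLinearMap
      (totalPDeriv K n r f m).toLinearMap := by
  rw [totalPDeriv_toLinearMap]
  refine (commute_pderiv _ _).add_right (Commute.sum_right _ _ _ fun k _ => ?_)
  have hcoeff : pderiv (Sum.inr i) (pderiv (Sum.inl m) (liftX K n r (f k))) = 0 := by
    rw [pderiv_inl_liftX, pderiv_inr_liftX]
  exact ((Derivation.commute_mulLeft_of_apply_eq_zero _ hcoeff).mul_left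
    (commute_pderiv _ _).symm).symm

theorem stmt18_general (K : Type*) [Field K] (n r : ℕ)
    (f : Fin r → MvPolynomial (Fin n) K) (i j : Fin r) (m : Fin n) :
    (SOp K n r i j + LinearMap.mulLeft K (liftX K n r (f j)) *
        (pderiv (Sum.inr i)).toLinearMap) *
      ((pderiv (Sum.inl m)).toLinearMap +
        ∑ k, LinearMap.mulLeft K (pderiv (Sum.inl m) (liftX K n r (f k))) *
          (pderiv (Sum.inr k)).toLinearMap) =
    ((pderiv (Sum.inl m)).toLinearMap +
        ∑ k, LinearMap.mulLeft K (pderiv (Sum.inl m) (liftX K n r (f k))) *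
          (pderiv (Sum.inr k)).toLinearMap) *
      (SOp K n r i j + LinearMap.mulLeft K (liftX K n r (f j)) *
        (pderiv (Sum.inr i)).toLinearMap) := by
  rw [← totalPDeriv_toLinearMap, SOp_add_mulLeft_mul_pderiv]
  have hmul : Commute (LinearMap.mulLeft K (liftX K n r (f j) - X (Sum.inr j)) *
      (pderiv (Sum.inr i)).toLinearMap) (totalPDeriv K n r f m).toLinearMap :=
    ((totalPDeriv K n r f m).commute_mulLeft_of_apply_eq_zero
      (totalPDeriv_liftX_sub_X K n r f m j)).mul_left
      (commute_pderiv_inr_totalPDeriv K n r f m i)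
  exact hmul.sub_left ((Commute.one_left _).smul_left _)

/-- `S_{ij} + M_{fⱼ}∘∂_{tᵢ}` commutes with
`∂_{x_m} + Σ_k M_{∂f_k/∂x_m}∘∂_{t_k}`. -/
theorem stmt18 (K : Type*) [Field K] [CharZero K] (n r : ℕ)
    (f : Fin r → MvPolynomial (Fin n) K) (i j : Fin r) (m : Fin n) :
    (SOp K n r i j + LinearMap.mulLeft K (liftX K n r (f j)) *
        (pderiv (Sum.inr i)).toLinearMap) *
      ((pderiv (Sum.inl m)).toLinearMap +
        ∑ k, LinearMap.mulLeft K (pderiv (Sum.inl m) (liftX K n r (f k))) *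
          (pderiv (Sum.inr k)).toLinearMap) =
    ((pderiv (Sum.inl m)).toLinearMap +
        ∑ k, LinearMap.mulLeft K (pderiv (Sum.inl m) (liftX K n r (f k))) *
          (pderiv (Sum.inr k)).toLinearMap) *
      (SOp K n r i j + LinearMap.mulLeft K (liftX K n r (f j)) *
        (pderiv (Sum.inr i)).toLinearMap) :=
  stmt18_general K n r f i j m
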